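/- Let f : ℂ → S⁴₁ be a smooth map which is harmonic and conformal (⟨∂_z f, ∂_z f⟩ vanishes identically), i.e. a minimal immersion datum. Then ∂_z̄⟨∂_z² f, ∂_z² f⟩ vanishes identically; that is, the function z ↦ ⟨∂_z² f, ∂_z² f⟩ is holomorphic on ℂ. -/

import Mathlib

open Complex Matrix

noncomputable section

/-- Wirtinger derivative `∂_z`, applied componentwise. -/
def wdz {E : Type*} [NormedAddCommGroup E] [NormedSpace ℂ E] (g : ℂ → E) (z : ℂ) : E :=
  ((1 : ℂ)/2) • (fderiv ℝ g z 1) - (Complex.I/2) • (fderiv ℝ g z Complex.I)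

/-- Wirtinger derivative `∂_z̄`, applied componentwise. -/
def wdzbar {E : Type*} [NormedAddCommGroup E] [NormedSpace ℂ E] (g : ℂ → E) (z : ℂ) : E :=
  ((1 : ℂ)/2) • (fderiv ℝ g z 1) + (Complex.I/2) • (fderiv ℝ g z Complex.I)

/-- Complex-bilinear extension of the Minkowski form, on `ℂ^{m+1}`, signature `(m,1)`. -/
def minkC (m : ℕ) (x y : Fin (m+1) → ℂ) : ℂ :=
  ∑ i : Fin (m+1), (if (i : ℕ) = m then -(x i * y i) else x i * y i)

/-- Minkowski bilinear form on `ℝ^{m+1}`, signature `(m,1)`. -/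
def minkR (m : ℕ) (x y : Fin (m+1) → ℝ) : ℝ :=
  ∑ i : Fin (m+1), (if (i : ℕ) = m then -(x i * y i) else x i * y i)

/-- Componentwise complexification of a real-vector-valued map. -/
def cplx {N : ℕ} (f : ℂ → Fin N → ℝ) : ℂ → Fin N → ℂ :=
  fun z i => (f z i : ℂ)

/-- Componentwise complex conjugation. -/
def conjV {N : ℕ} (v : Fin N → ℂ) : Fin N → ℂ :=
  fun i => (starRingEnd ℂ) (v i)

/-- `1`-based standard basis vector `e_k` of `ℝ^N`. -/
def eR (N k : ℕ) : Fin N → ℝ := fun i => if (i : ℕ) + 1 = k then 1 else 0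

/-- `1`-based standard basis vector `e_k` of `ℂ^N`. -/
def eC (N k : ℕ) : Fin N → ℂ := fun i => if (i : ℕ) + 1 = k then 1 else 0

/-- A smooth harmonic map of `ℂ` into de Sitter space `S^{2n}_1`. -/
def IsHarmonicS (n : ℕ) (f : ℂ → Fin (2*n+1) → ℝ) : Prop :=
  ContDiff ℝ (⊤ : ℕ∞) f ∧ (∀ z, minkR (2*n) (f z) (f z) = 1) ∧
    ∀ z, ∃ r : ℝ, wdz (wdzbar (cplx f)) z = (r : ℂ) • cplx f z

/-- `f` has isotropy order at least `r`. -/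
def HasIsotropyOrderAtLeast (n r : ℕ) (f : ℂ → Fin (2*n+1) → ℝ) : Prop :=
  ∀ a b : ℕ, 1 ≤ a + b → a + b ≤ 2*r + 1 →
    ∀ z, minkC (2*n) (wdz^[a] (cplx f) z) (wdz^[b] (cplx f) z) = 0

/-- `f` is superconformal: isotropy order at least `n-1`, and
`⟨∂_z^n f, ∂_z^n f⟩` does not vanish identically. -/
def IsSuperconformal (n : ℕ) (f : ℂ → Fin (2*n+1) → ℝ) : Prop :=
  HasIsotropyOrderAtLeast n (n-1) f ∧
    ∃ z, minkC (2*n) (wdz^[n] (cplx f) z) (wdz^[n] (cplx f) z) ≠ 0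

/-- `fs 0, fs 1, …, fs n` is a globally defined harmonic sequence for `f`. -/
def IsHarmonicSeq (n : ℕ) (f : ℂ → Fin (2*n+1) → ℝ)
    (fs : ℕ → ℂ → Fin (2*n+1) → ℂ) : Prop :=
  fs 0 = cplx f ∧ (∀ j, j ≤ n → ContDiff ℝ (⊤ : ℕ∞) (fs j)) ∧
    ∀ j, j < n →
      DiscreteTopology {z : ℂ // minkC (2*n) (fs j z) (conjV (fs j z)) = 0} ∧
      ∀ z, minkC (2*n) (fs j z) (conjV (fs j z)) ≠ 0 →
        fs (j+1) z = wdz (fs j) z -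
          (minkC (2*n) (wdz (fs j) z) (conjV (fs j z)) /
            minkC (2*n) (fs j z) (conjV (fs j z))) • fs j z

/-- The matrix `υ = diag(1,…,1,-1)` of the Minkowski form. -/
def upsR (n : ℕ) : Matrix (Fin (2*n+1)) (Fin (2*n+1)) ℝ :=
  Matrix.diagonal (fun i => if (i : ℕ) = 2*n then -1 else 1)

/-- Membership in `SO(2n,1)`. -/
def memSO (n : ℕ) (g : Matrix (Fin (2*n+1)) (Fin (2*n+1)) ℝ) : Prop :=
  gᵀ * upsR n * g = upsR n ∧ g.det = 1

/-- The prescribed entries (in `1`-based indices `j k`) of the Maurer–Cartan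
matrix `M = F⁻¹ ∂_z F` of a primitive frame. -/
def Ment (n : ℕ) (a c : ℕ → ℂ) (j k : ℕ) : ℂ :=
  if j = 1 ∧ k = 2 then -c 1
  else if j = 1 ∧ k = 3 then -(Complex.I * c 1)
  else if j = 2 ∧ k = 1 then c 1
  else if j = 3 ∧ k = 1 then Complex.I * c 1
  else if Even j ∧ k = j + 1 ∧ 2 ≤ j ∧ j ≤ 2*n then
    (if j = 2*n then a n else a (j/2))
  else if Even k ∧ j = k + 1 ∧ 2 ≤ k ∧ k ≤ 2*n then
    (if k = 2*n then a n else -a (k/2))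
  else if j = 2*n - 2 ∧ k = 2*n then -c n - c 0
  else if j = 2*n - 2 ∧ k = 2*n + 1 then -c n + c 0
  else if j = 2*n - 1 ∧ k = 2*n then Complex.I * c n + Complex.I * c 0
  else if j = 2*n - 1 ∧ k = 2*n + 1 then Complex.I * c n - Complex.I * c 0
  else if j = 2*n ∧ k = 2*n - 2 then c n + c 0
  else if j = 2*n ∧ k = 2*n - 1 then -(Complex.I * c n) - Complex.I * c 0
  else if j = 2*n + 1 ∧ k = 2*n - 2 then -c n + c 0
  else if j = 2*n + 1 ∧ k = 2*n - 1 then Complex.I * c n - Complex.I * c 0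
  else if Even j ∧ k = j + 2 ∧ 2 ≤ j ∧ j + 4 ≤ 2*n then -c (j/2 + 1)
  else if Even j ∧ k = j + 3 ∧ 2 ≤ j ∧ j + 4 ≤ 2*n then -(Complex.I * c (j/2 + 1))
  else if Odd j ∧ k = j + 1 ∧ 3 ≤ j ∧ j + 3 ≤ 2*n then Complex.I * c (j/2 + 1)
  else if Odd j ∧ k = j + 2 ∧ 3 ≤ j ∧ j + 3 ≤ 2*n then -c (j/2 + 1)
  else if Even k ∧ j = k + 2 ∧ 2 ≤ k ∧ k + 4 ≤ 2*n then c (k/2 + 1)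
  else if Odd k ∧ j = k + 1 ∧ 3 ≤ k ∧ k + 3 ≤ 2*n then -(Complex.I * c (k/2 + 1))
  else if Even k ∧ j = k + 3 ∧ 2 ≤ k ∧ k + 4 ≤ 2*n then Complex.I * c (k/2 + 1)
  else if Odd k ∧ j = k + 2 ∧ 3 ≤ k ∧ k + 3 ≤ 2*n then c (k/2 + 1)
  else 0

/-- The Maurer–Cartan form `F⁻¹ ∂_z F` (computed entrywise after complexifying `F`). -/
def MC (n : ℕ) (F : ℂ → Matrix (Fin (2*n+1)) (Fin (2*n+1)) ℝ) (z : ℂ) :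
    Matrix (Fin (2*n+1)) (Fin (2*n+1)) ℂ :=
  ((F z).map (fun t => (t : ℂ)))⁻¹ *
    Matrix.of (fun p q => wdz (fun w => ((F w p q : ℝ) : ℂ)) z)

/-- `F` is a primitive frame with coefficient functions `a 1, …, a n` and
`c 0, c 1, …, c n`. -/
def IsPrimitiveFrame (n : ℕ) (F : ℂ → Matrix (Fin (2*n+1)) (Fin (2*n+1)) ℝ)
    (a c : ℕ → ℂ → ℂ) : Prop :=
  (∀ p q, ContDiff ℝ (⊤ : ℕ∞) (fun z => F z p q)) ∧
  (∀ z, memSO n (F z)) ∧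
  (∀ j, 1 ≤ j → j ≤ n → ContDiff ℝ (⊤ : ℕ∞) (a j)) ∧
  (∀ j, j ≤ n → ContDiff ℝ (⊤ : ℕ∞) (c j)) ∧
  ∀ z, MC n F z =
    Matrix.of (fun p q : Fin (2*n+1) =>
      Ment n (fun k => a k z) (fun k => c k z) ((p : ℕ) + 1) ((q : ℕ) + 1))

/-- The primitive frame is cyclic: at some point all of `c 0, …, c n` are nonzero. -/
def IsCyclicCoeffs (n : ℕ) (c : ℕ → ℂ → ℂ) : Prop :=
  ∃ z, ∀ j, j ≤ n → c j z ≠ 0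

/-- Double periodicity with respect to the lattice generated by `ω₁, ω₂`. -/
def DoublyPeriodic {α : Type*} (ω₁ ω₂ : ℂ) (f : ℂ → α) : Prop :=
  LinearIndependent ℝ ![ω₁, ω₂] ∧ ∀ z, f (z + ω₁) = f z ∧ f (z + ω₂) = f z


section Aux
variable {E : Type*} [NormedAddCommGroup E] [NormedSpace ℂ E]

lemma wdz_smooth {g : ℂ → E} (hg : ContDiff ℝ (⊤ : ℕ∞) g) : ContDiff ℝ (⊤ : ℕ∞) (wdz g) := by
  have h1 : ContDiff ℝ (⊤ : ℕ∞) (fun z => fderiv ℝ g z 1) :=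
    (hg.fderiv_right (by simp)).clm_apply contDiff_const
  have h2 : ContDiff ℝ (⊤ : ℕ∞) (fun z => fderiv ℝ g z Complex.I) :=
    (hg.fderiv_right (by simp)).clm_apply contDiff_const
  exact (h1.const_smul _).sub (h2.const_smul _)

lemma wdzbar_smooth {g : ℂ → E} (hg : ContDiff ℝ (⊤ : ℕ∞) g) : ContDiff ℝ (⊤ : ℕ∞) (wdzbar g) := by
  have h1 : ContDiff ℝ (⊤ : ℕ∞) (fun z => fderiv ℝ g z 1) :=
    (hg.fderiv_right (by simp)).clm_apply contDiff_const
  have h2 : ContDiff ℝ (⊤ : ℕ∞) (fun z => fderiv ℝ g z Complex.I) :=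
    (hg.fderiv_right (by simp)).clm_apply contDiff_const
  exact (h1.const_smul _).add (h2.const_smul _)

lemma wdz_const (c : E) (z : ℂ) : wdz (fun _ => c) z = 0 := by
  simp [wdz]

lemma fderiv_fderiv_apply {g : ℂ → E} (hg : ContDiff ℝ (⊤ : ℕ∞) g) (z a v : ℂ) :
    fderiv ℝ (fun w => fderiv ℝ g w a) z v = fderiv ℝ (fderiv ℝ g) z v a := by
  have hD : DifferentiableAt ℝ (fderiv ℝ g) z :=
    (hg.fderiv_right (m := (⊤ : ℕ∞)) (by simp)).differentiable (by simp) z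
  rw [fderiv_clm_apply hD (differentiableAt_const a)]
  simp

lemma sndsymm {g : ℂ → E} (hg : ContDiff ℝ (⊤ : ℕ∞) g) (z v w : ℂ) :
    fderiv ℝ (fderiv ℝ g) z v w = fderiv ℝ (fderiv ℝ g) z w v :=
  second_derivative_symmetric (fun y => (hg.differentiable (by simp) y).hasFDerivAt)
    (((hg.fderiv_right (m := (⊤ : ℕ∞)) (by simp)).differentiable (by simp) z).hasFDerivAt) v w

lemma wdz_wdzbar_comm {g : ℂ → E} (hg : ContDiff ℝ (⊤ : ℕ∞) g) (z : ℂ) :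
    wdz (wdzbar g) z = wdzbar (wdz g) z := by
  have hda : ∀ (w : ℂ) (a : ℂ), DifferentiableAt ℝ (fun u => fderiv ℝ g u a) w := fun w a =>
    (((hg.fderiv_right (m := (⊤ : ℕ∞)) (by simp)).differentiable (by simp) w).clm_apply (differentiableAt_const a))
  have key : ∀ v : ℂ, fderiv ℝ (wdzbar g) z v =
      ((1:ℂ)/2) • fderiv ℝ (fderiv ℝ g) z v 1 + (Complex.I/2) • fderiv ℝ (fderiv ℝ g) z v Complex.I := by
    intro v
    have : wdzbar g = fun w => ((1:ℂ)/2) • (fun u => fderiv ℝ g u 1) w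
        + (Complex.I/2) • (fun u => fderiv ℝ g u Complex.I) w := rfl
    rw [this, fderiv_fun_add (f := fun w => ((1:ℂ)/2) • (fun u => fderiv ℝ g u 1) w) (g := fun w => (Complex.I/2) • (fun u => fderiv ℝ g u Complex.I) w) ((hda z 1).const_smul _) ((hda z Complex.I).const_smul _),
      fderiv_fun_const_smul (hda z 1), fderiv_fun_const_smul (hda z Complex.I)]
    simp [fderiv_fderiv_apply hg]
  have key2 : ∀ v : ℂ, fderiv ℝ (wdz g) z v =
      ((1:ℂ)/2) • fderiv ℝ (fderiv ℝ g) z v 1 - (Complex.I/2) • fderiv ℝ (fderiv ℝ g) z v Complex.I := by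
    intro v
    have : wdz g = fun w => ((1:ℂ)/2) • (fun u => fderiv ℝ g u 1) w
        - (Complex.I/2) • (fun u => fderiv ℝ g u Complex.I) w := rfl
    rw [this, fderiv_fun_sub (f := fun w => ((1:ℂ)/2) • (fun u => fderiv ℝ g u 1) w) (g := fun w => (Complex.I/2) • (fun u => fderiv ℝ g u Complex.I) w) ((hda z 1).const_smul _) ((hda z Complex.I).const_smul _),
      fderiv_fun_const_smul (hda z 1), fderiv_fun_const_smul (hda z Complex.I)]
    simp [fderiv_fderiv_apply hg]
  show ((1 : ℂ)/2) • (fderiv ℝ (wdzbar g) z 1) - (Complex.I/2) • (fderiv ℝ (wdzbar g) z Complex.I)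
      = ((1 : ℂ)/2) • (fderiv ℝ (wdz g) z 1) + (Complex.I/2) • (fderiv ℝ (wdz g) z Complex.I)
  rw [key 1, key Complex.I, key2 1, key2 Complex.I, sndsymm hg z Complex.I 1]
  module

end Aux

section Aux2

lemma minkC_eq (m : ℕ) (x y : Fin (m+1) → ℂ) :
    minkC m x y = ∑ i : Fin (m+1), (if (i:ℕ) = m then (-1:ℂ) else 1) * (x i * y i) := by
  refine Finset.sum_congr rfl fun i _ => ?_
  split_ifs <;> ring

lemma minkC_symm (m : ℕ) (x y : Fin (m+1) → ℂ) : minkC m x y = minkC m y x := by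
  refine Finset.sum_congr rfl fun i _ => ?_
  split_ifs <;> ring

lemma minkC_smul_left (m : ℕ) (c : ℂ) (x y : Fin (m+1) → ℂ) :
    minkC m (c • x) y = c * minkC m x y := by
  simp only [minkC_eq, Pi.smul_apply, smul_eq_mul, Finset.mul_sum]
  exact Finset.sum_congr rfl fun i _ => by ring

lemma minkC_add_left (m : ℕ) (x x' y : Fin (m+1) → ℂ) :
    minkC m (x + x') y = minkC m x y + minkC m x' y := by
  simp only [minkC_eq, Pi.add_apply, ← Finset.sum_add_distrib]
  exact Finset.sum_congr rfl fun i _ => by ring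

lemma minkC_ofReal (m : ℕ) (x y : Fin (m+1) → ℝ) :
    minkC m (fun i => (x i : ℂ)) (fun i => (y i : ℂ)) = ((minkR m x y : ℝ) : ℂ) := by
  unfold minkC minkR
  push_cast [apply_ite ((↑·) : ℝ → ℂ)]
  rfl

lemma fderiv_coord {N : ℕ} {g : ℂ → Fin N → ℂ} {z : ℂ} (hg : DifferentiableAt ℝ g z)
    (v : ℂ) (i : Fin N) :
    fderiv ℝ (fun w => g w i) z v = fderiv ℝ g z v i := by
  have he : (fun w => g w i)
      = (ContinuousLinearMap.proj (R := ℝ) (φ := fun _ : Fin N => ℂ) i) ∘ g := rfl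
  rw [he, fderiv_comp z (ContinuousLinearMap.differentiableAt _) hg]
  simp

lemma wdz_coord {N : ℕ} {g : ℂ → Fin N → ℂ} {z : ℂ} (hg : DifferentiableAt ℝ g z) (i : Fin N) :
    wdz (fun w => g w i) z = wdz g z i := by
  unfold wdz
  rw [fderiv_coord hg, fderiv_coord hg]
  simp

lemma wdzbar_coord {N : ℕ} {g : ℂ → Fin N → ℂ} {z : ℂ} (hg : DifferentiableAt ℝ g z) (i : Fin N) :
    wdzbar (fun w => g w i) z = wdzbar g z i := by
  unfold wdzbar
  rw [fderiv_coord hg, fderiv_coord hg]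
  simp

lemma wdz_mul {u v : ℂ → ℂ} {z : ℂ} (hu : DifferentiableAt ℝ u z) (hv : DifferentiableAt ℝ v z) :
    wdz (fun w => u w * v w) z = wdz u z * v z + u z * wdz v z := by
  unfold wdz
  rw [fderiv_fun_mul hu hv]
  simp only [ContinuousLinearMap.add_apply, ContinuousLinearMap.smul_apply, smul_eq_mul]
  ring

lemma wdzbar_mul {u v : ℂ → ℂ} {z : ℂ} (hu : DifferentiableAt ℝ u z) (hv : DifferentiableAt ℝ v z) :
    wdzbar (fun w => u w * v w) z = wdzbar u z * v z + u z * wdzbar v z := by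
  unfold wdzbar
  rw [fderiv_fun_mul hu hv]
  simp only [ContinuousLinearMap.add_apply, ContinuousLinearMap.smul_apply, smul_eq_mul]
  ring

lemma wdz_sum {ι : Type*} (s : Finset ι) {u : ι → ℂ → ℂ} {z : ℂ}
    (h : ∀ i ∈ s, DifferentiableAt ℝ (u i) z) :
    wdz (fun w => ∑ i ∈ s, u i w) z = ∑ i ∈ s, wdz (u i) z := by
  unfold wdz
  rw [fderiv_fun_sum h]
  simp [Finset.smul_sum, Finset.sum_sub_distrib, Finset.mul_sum]

lemma wdzbar_sum {ι : Type*} (s : Finset ι) {u : ι → ℂ → ℂ} {z : ℂ}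
    (h : ∀ i ∈ s, DifferentiableAt ℝ (u i) z) :
    wdzbar (fun w => ∑ i ∈ s, u i w) z = ∑ i ∈ s, wdzbar (u i) z := by
  unfold wdzbar
  rw [fderiv_fun_sum h]
  simp [Finset.smul_sum, Finset.sum_add_distrib, Finset.mul_sum]

lemma wdz_const' (c : ℂ) (z : ℂ) : wdz (fun _ => c) z = 0 := by simp [wdz]
lemma wdzbar_const' (c : ℂ) (z : ℂ) : wdzbar (fun _ => c) z = 0 := by simp [wdzbar]

lemma wdz_const_mul (c : ℂ) {u : ℂ → ℂ} {z : ℂ} (hu : DifferentiableAt ℝ u z) :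
    wdz (fun w => c * u w) z = c * wdz u z := by
  rw [wdz_mul (differentiableAt_const c) hu, wdz_const']
  ring

lemma wdzbar_const_mul (c : ℂ) {u : ℂ → ℂ} {z : ℂ} (hu : DifferentiableAt ℝ u z) :
    wdzbar (fun w => c * u w) z = c * wdzbar u z := by
  rw [wdzbar_mul (differentiableAt_const c) hu, wdzbar_const']
  ring

lemma wdz_minkC {m : ℕ} {u v : ℂ → Fin (m+1) → ℂ} {z : ℂ}
    (hu : DifferentiableAt ℝ u z) (hv : DifferentiableAt ℝ v z) :
    wdz (fun w => minkC m (u w) (v w)) z = minkC m (wdz u z) (v z) + minkC m (u z) (wdz v z) := by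
  have hui : ∀ i, DifferentiableAt ℝ (fun w => u w i) z := fun i => differentiableAt_pi.mp hu i
  have hvi : ∀ i, DifferentiableAt ℝ (fun w => v w i) z := fun i => differentiableAt_pi.mp hv i
  have he : (fun w => minkC m (u w) (v w))
      = fun w => ∑ i : Fin (m+1), (if (i:ℕ) = m then (-1:ℂ) else 1) * (u w i * v w i) := by
    funext w; exact minkC_eq m (u w) (v w)
  rw [he, wdz_sum _ (fun i _ => (differentiableAt_const _).fun_mul ((hui i).fun_mul (hvi i)))]
  simp only [minkC_eq, ← Finset.sum_add_distrib]
  refine Finset.sum_congr rfl fun i _ => ?_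
  rw [wdz_const_mul _ ((hui i).fun_mul (hvi i)), wdz_mul (hui i) (hvi i),
    wdz_coord hu i, wdz_coord hv i]
  ring

lemma wdzbar_minkC {m : ℕ} {u v : ℂ → Fin (m+1) → ℂ} {z : ℂ}
    (hu : DifferentiableAt ℝ u z) (hv : DifferentiableAt ℝ v z) :
    wdzbar (fun w => minkC m (u w) (v w)) z
      = minkC m (wdzbar u z) (v z) + minkC m (u z) (wdzbar v z) := by
  have hui : ∀ i, DifferentiableAt ℝ (fun w => u w i) z := fun i => differentiableAt_pi.mp hu i
  have hvi : ∀ i, DifferentiableAt ℝ (fun w => v w i) z := fun i => differentiableAt_pi.mp hv i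
  have he : (fun w => minkC m (u w) (v w))
      = fun w => ∑ i : Fin (m+1), (if (i:ℕ) = m then (-1:ℂ) else 1) * (u w i * v w i) := by
    funext w; exact minkC_eq m (u w) (v w)
  rw [he, wdzbar_sum _ (fun i _ => (differentiableAt_const _).fun_mul ((hui i).fun_mul (hvi i)))]
  simp only [minkC_eq, ← Finset.sum_add_distrib]
  refine Finset.sum_congr rfl fun i _ => ?_
  rw [wdzbar_const_mul _ ((hui i).fun_mul (hvi i)), wdzbar_mul (hui i) (hvi i),
    wdzbar_coord hu i, wdzbar_coord hv i]
  ring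

lemma contDiff_minkC {m : ℕ} {u v : ℂ → Fin (m+1) → ℂ}
    (hu : ContDiff ℝ (⊤ : ℕ∞) u) (hv : ContDiff ℝ (⊤ : ℕ∞) v) :
    ContDiff ℝ (⊤ : ℕ∞) (fun w => minkC m (u w) (v w)) := by
  have he : (fun w => minkC m (u w) (v w))
      = fun w => ∑ i : Fin (m+1), (if (i:ℕ) = m then (-1:ℂ) else 1) * (u w i * v w i) := by
    funext w; exact minkC_eq m (u w) (v w)
  rw [he]
  exact ContDiff.sum fun i _ =>
    contDiff_const.mul ((contDiff_pi.mp hu i).mul (contDiff_pi.mp hv i))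

lemma wdz_smul_fun {N : ℕ} {ρ : ℂ → ℂ} {F : ℂ → Fin N → ℂ} {z : ℂ}
    (hρ : DifferentiableAt ℝ ρ z) (hF : DifferentiableAt ℝ F z) :
    wdz (fun w => ρ w • F w) z = wdz ρ z • F z + ρ z • wdz F z := by
  funext i
  have h1 : wdz (fun w => ρ w • F w) z i = wdz (fun w => ρ w * F w i) z :=
    (wdz_coord (hρ.smul hF) i).symm
  rw [h1, wdz_mul hρ (differentiableAt_pi.mp hF i), wdz_coord hF i]
  simp

end Aux2

/-- If `f : ℂ → S⁴₁` is a smooth harmonic conformal map, then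
`z ↦ ⟨∂_z² f, ∂_z² f⟩` is holomorphic on `ℂ`. -/
theorem stmt11 (f : ℂ → Fin (2*2+1) → ℝ)
    (hsmooth : ContDiff ℝ (⊤ : ℕ∞) f)
    (hsphere : ∀ z, minkR (2*2) (f z) (f z) = 1)
    (hharm : ∀ z, ∃ r : ℝ, wdz (wdzbar (cplx f)) z = (r : ℂ) • cplx f z)
    (hconf : ∀ z, minkC (2*2) (wdz (cplx f) z) (wdz (cplx f) z) = 0) :
    ∀ z, wdzbar
      (fun w => minkC (2*2) (wdz^[2] (cplx f) w) (wdz^[2] (cplx f) w)) z = 0 := by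
  intro z
  have hF : ContDiff ℝ (⊤ : ℕ∞) (cplx f) := by
    rw [contDiff_pi]
    intro i
    exact Complex.ofRealCLM.contDiff.comp (contDiff_pi.mp hsmooth i)
  have hF1 : ContDiff ℝ (⊤ : ℕ∞) (wdz (cplx f)) := wdz_smooth hF
  have hF2 : ContDiff ℝ (⊤ : ℕ∞) (wdz (wdz (cplx f))) := wdz_smooth hF1
  have hFb : ContDiff ℝ (⊤ : ℕ∞) (wdzbar (cplx f)) := wdzbar_smooth hF
  have hG : ContDiff ℝ (⊤ : ℕ∞) (wdz (wdzbar (cplx f))) := wdz_smooth hFb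
  have dF : ∀ w, DifferentiableAt ℝ (cplx f) w := fun w => (hF.differentiable (by simp)) w
  have dF1 : ∀ w, DifferentiableAt ℝ (wdz (cplx f)) w := fun w => (hF1.differentiable (by simp)) w
  have dF2 : ∀ w, DifferentiableAt ℝ (wdz (wdz (cplx f))) w :=
    fun w => (hF2.differentiable (by simp)) w
  have dG : ∀ w, DifferentiableAt ℝ (wdz (wdzbar (cplx f))) w :=
    fun w => (hG.differentiable (by simp)) w
  -- basic identities
  have c0 : ∀ w, minkC (2*2) (cplx f w) (cplx f w) = 1 := by
    intro w
    have h1 : minkC (2*2) (cplx f w) (cplx f w)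
        = ((minkR (2*2) (f w) (f w) : ℝ) : ℂ) := minkC_ofReal (2*2) (f w) (f w)
    rw [h1, hsphere w]
    norm_num
  have c1 : ∀ w, minkC (2*2) (wdz (cplx f) w) (cplx f w) = 0 := by
    intro w
    have hd : wdz (fun u => minkC (2*2) (cplx f u) (cplx f u)) w = 0 := by
      have he : (fun u => minkC (2*2) (cplx f u) (cplx f u)) = fun _ => (1:ℂ) := funext c0
      rw [he, wdz_const']
    rw [wdz_minkC (dF w) (dF w)] at hd
    have hs : minkC (2*2) (cplx f w) (wdz (cplx f) w)
        = minkC (2*2) (wdz (cplx f) w) (cplx f w) := minkC_symm _ _ _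
    rw [hs] at hd
    linear_combination hd / 2
  have c2 : ∀ w, minkC (2*2) (wdz (wdz (cplx f)) w) (cplx f w) = 0 := by
    intro w
    have hd : wdz (fun u => minkC (2*2) (wdz (cplx f) u) (cplx f u)) w = 0 := by
      have he : (fun u => minkC (2*2) (wdz (cplx f) u) (cplx f u)) = fun _ => (0:ℂ) := funext c1
      rw [he, wdz_const']
    rw [wdz_minkC (dF1 w) (dF w)] at hd
    have hs : minkC (2*2) (wdz (cplx f) w) (wdz (cplx f) w) = 0 := hconf w
    rw [hs] at hd
    linear_combination hd
  have c3 : ∀ w, minkC (2*2) (wdz (wdz (cplx f)) w) (wdz (cplx f) w) = 0 := by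
    intro w
    have hd : wdz (fun u => minkC (2*2) (wdz (cplx f) u) (wdz (cplx f) u)) w = 0 := by
      have he : (fun u => minkC (2*2) (wdz (cplx f) u) (wdz (cplx f) u)) = fun _ => (0:ℂ) :=
        funext hconf
      rw [he, wdz_const']
    rw [wdz_minkC (dF1 w) (dF1 w)] at hd
    have hs : minkC (2*2) (wdz (cplx f) w) (wdz (wdz (cplx f)) w)
        = minkC (2*2) (wdz (wdz (cplx f)) w) (wdz (cplx f) w) := minkC_symm _ _ _
    rw [hs] at hd
    linear_combination hd / 2
  -- the harmonic term
  have hρeq : wdz (wdzbar (cplx f))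
      = fun w => (minkC (2*2) (wdz (wdzbar (cplx f)) w) (cplx f w)) • cplx f w := by
    funext w
    obtain ⟨r, hr⟩ := hharm w
    rw [hr, minkC_smul_left, c0 w, mul_one]
  have hρ : ContDiff ℝ (⊤ : ℕ∞) (fun w => minkC (2*2) (wdz (wdzbar (cplx f)) w) (cplx f w)) :=
    contDiff_minkC hG hF
  have hkey : minkC (2*2) (wdz (wdz (wdzbar (cplx f))) z) (wdz (wdz (cplx f)) z) = 0 := by
    conv_lhs => rw [hρeq]
    rw [wdz_smul_fun ((hρ.differentiable (by simp)) z) (dF z), minkC_add_left,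
      minkC_smul_left, minkC_smul_left]
    have hs1 : minkC (2*2) (cplx f z) (wdz (wdz (cplx f)) z)
        = minkC (2*2) (wdz (wdz (cplx f)) z) (cplx f z) := minkC_symm _ _ _
    have hs2 : minkC (2*2) (wdz (cplx f) z) (wdz (wdz (cplx f)) z)
        = minkC (2*2) (wdz (wdz (cplx f)) z) (wdz (cplx f) z) := minkC_symm _ _ _
    rw [hs1, hs2, c2 z, c3 z]
    ring
  -- conclude
  have hiter : wdz^[2] (cplx f) = wdz (wdz (cplx f)) := rfl
  rw [hiter, wdzbar_minkC (dF2 z) (dF2 z)]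
  have hcomm : wdzbar (wdz (wdz (cplx f))) z = wdz (wdz (wdzbar (cplx f))) z := by
    rw [← wdz_wdzbar_comm hF1 z]
    have he : wdzbar (wdz (cplx f)) = wdz (wdzbar (cplx f)) :=
      funext fun w => (wdz_wdzbar_comm hF w).symm
    rw [he]
  rw [hcomm]
  have hs : minkC (2*2) (wdz (wdz (cplx f)) z) (wdz (wdz (wdzbar (cplx f))) z)
      = minkC (2*2) (wdz (wdz (wdzbar (cplx f))) z) (wdz (wdz (cplx f)) z) := minkC_symm _ _ _
  rw [hs, hkey]
  ring

end
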